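/- Let D be a regular (216, 43, 10, 8)-PDS in the group G = (ℤ/2ℤ)³ × (ℤ/3ℤ)³, and let H be a subgroup of G of order 72 (equivalently, of index 3). Then |H ∩ D| = 11 or |H ∩ D| = 19. -/

import Mathlib

/-- The number of representations of `g` as `a * b⁻¹` with `a, b ∈ D`. -/
def diffReps {G : Type*} [Group G] [DecidableEq G] (D : Finset G) (g : G) : ℕ :=
  ((D ×ˢ D).filter (fun p => p.1 * p.2⁻¹ = g)).card

/-- `D` is a `(v, k, λ, μ)`-partial difference set in the finite group `G`. -/
def IsPDS {G : Type*} [Group G] [Fintype G] [DecidableEq G]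
    (D : Finset G) (v k l m : ℕ) : Prop :=
  Fintype.card G = v ∧ D.card = k ∧
  ∀ g : G, g ≠ 1 →
    (g ∈ D → diffReps D g = l) ∧ (g ∉ D → diffReps D g = m)

/-- `D` is regular: it does not contain the identity and is closed under inverses. -/
def IsRegularPDS {G : Type*} [Group G] (D : Finset G) : Prop :=
  (1 : G) ∉ D ∧ ∀ d : G, d ∈ D ↔ d⁻¹ ∈ D

/-- A regular PDS `D` is trivial if `D ∪ {e}` or `G \ D` is a subgroup of `G`. -/
def IsTrivialPDS {G : Type*} [Group G] (D : Finset G) : Prop :=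
  (∃ H : Subgroup G, (H : Set G) = insert (1 : G) ↑D) ∨
  (∃ H : Subgroup G, (H : Set G) = (↑D : Set G)ᶜ)

/-- The group `(ℤ/2ℤ)³ × (ℤ/3ℤ)³`, written multiplicatively. -/
abbrev G216 : Type := Multiplicative ((Fin 3 → ZMod 2) × (Fin 3 → ZMod 3))

/-! Let `a = |H ∩ D|`. Inversion preserves `D` and swaps the two nontrivial cosets of `H`, so
both meet `D` in the same number `b` of elements, and counting `D` gives `a + 2b = 43`.
Counting the pairs `(x, y) ∈ D²` with `x y⁻¹ ∈ H` once by cosets and once through the PDS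
parameters on `H` gives `a² + 2b² = 43 + 10a + 8(71 - a)`. Eliminating `b` leaves
`(a - 11)(a - 19) = 0`. -/

open Finset

lemma Finset.card_filter_apply_eq_apply_eq_sum_sq {α β : Type*} [Fintype β] [DecidableEq β]
    (s : Finset α) (f : α → β) :
    #{p ∈ s ×ˢ s | f p.1 = f p.2} = ∑ b, #{a ∈ s | f a = b} ^ 2 := by
  rw [card_eq_sum_card_fiberwise (f := fun p => f p.1) (t := univ)
    fun _ _ => mem_coe.2 (mem_univ _)]
  refine sum_congr rfl fun b _ => ?_
  rw [sq, ← card_product]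
  congr 1
  ext ⟨x, y⟩
  simp only [mem_filter, mem_product]
  constructor
  · rintro ⟨⟨⟨hx, hy⟩, hxy⟩, rfl⟩
    exact ⟨⟨hx, rfl⟩, hy, hxy.symm⟩
  · rintro ⟨⟨hx, rfl⟩, hy, hyx⟩
    exact ⟨⟨⟨hx, hy⟩, hyx.symm⟩, rfl⟩

lemma Fintype.sum_eq_add_add_inv_of_card_eq_three {Q M : Type*} [Group Q] [Fintype Q]
    [AddCommMonoid M] (hQ : Fintype.card Q = 3) {u : Q} (hu : u ≠ 1) (f : Q → M) :
    ∑ t, f t = f 1 + f u + f u⁻¹ := by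
  have hu_inv : u⁻¹ ≠ u := by
    intro h
    have h2 : orderOf u ∣ 2 := orderOf_dvd_of_pow_eq_one (by rw [sq, mul_eq_one_iff_eq_inv, h])
    have h3 : orderOf u ∣ 3 := hQ ▸ orderOf_dvd_card
    exact hu (orderOf_eq_one_iff.1 (Nat.dvd_one.1 (Nat.dvd_gcd h2 h3)))
  classical
  have h1 : (1 : Q) ∉ ({u, u⁻¹} : Finset Q) := by
    simp [hu, hu.symm]
  have huniv : ({1, u, u⁻¹} : Finset Q) = univ := by
    refine eq_univ_of_card _ ?_
    rw [card_insert_of_notMem h1, card_pair hu_inv.symm, hQ]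
  rw [← huniv, sum_insert h1, sum_pair hu_inv.symm, add_assoc]

section PartialDifferenceSet

variable {G : Type*} [Group G] [DecidableEq G]

lemma diffReps_one (D : Finset G) : diffReps D 1 = #D := by
  unfold diffReps
  simp_rw [mul_inv_eq_one]
  rw [← diag_eq_filter, diag_card]

lemma sum_diffReps (D S : Finset G) :
    ∑ g ∈ S, diffReps D g = #{p ∈ D ×ˢ D | p.1 * p.2⁻¹ ∈ S} :=
  sum_card_fiberwise_eq_card_filter _ _ _

lemma IsPDS.sum_diffReps [Fintype G] {D : Finset G} {v k l m : ℕ} (hD : IsPDS D v k l m)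
    (h1D : (1 : G) ∉ D) {S : Finset G} (h1S : (1 : G) ∈ S) :
    ∑ g ∈ S, diffReps D g = k + l * #(S ∩ D) + m * (#S - 1 - #(S ∩ D)) := by
  obtain ⟨-, hk, hlm⟩ := hD
  have hinter : {g ∈ S.erase 1 | g ∈ D} = S ∩ D := by
    rw [filter_mem_eq_inter, erase_inter, erase_eq_of_notMem (fun h => h1D (mem_inter.1 h).2)]
  have hcard : #{g ∈ S.erase 1 | g ∉ D} = #S - 1 - #(S ∩ D) := by
    rw [← hinter, ← card_erase_of_mem h1S,
      ← card_filter_add_card_filter_not (s := S.erase 1) (· ∈ D)]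
    omega
  rw [← add_sum_erase _ _ h1S, diffReps_one, hk, ← sum_filter_add_sum_filter_not _ (· ∈ D),
    sum_const_nat (m := l) fun g hg => ?_, sum_const_nat (m := m) fun g hg => ?_, hinter, hcard,
    add_assoc, mul_comm l, mul_comm m]
  · simp only [mem_filter, mem_erase] at hg
    exact (hlm g hg.1.1).2 hg.2
  · simp only [mem_filter, mem_erase] at hg
    exact (hlm g hg.1.1).1 hg.2

end PartialDifferenceSet

section Cosets

variable {G : Type*} [Group G]

open Classical in
noncomputable def fiberCard (D : Finset G) (H : Subgroup G) (t : G ⧸ H) : ℕ :=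
  #{d ∈ D | (QuotientGroup.mk d : G ⧸ H) = t}

open Classical in
lemma sum_fiberCard [Fintype G] (D : Finset G) (H : Subgroup G) : ∑ t, fiberCard D H t = #D :=
  (card_eq_sum_card_fiberwise fun _ _ => mem_coe.2 (mem_univ _)).symm

lemma fiberCard_one (D : Finset G) (H : Subgroup G) [H.Normal] :
    fiberCard D H 1 = ((H : Set G) ∩ D).ncard := by
  classical
  rw [fiberCard, ← Set.ncard_coe_finset, coe_filter]
  congr 1
  ext x
  simp [QuotientGroup.eq_one_iff, and_comm]

lemma fiberCard_inv {D : Finset G} (hD : ∀ d, d ∈ D ↔ d⁻¹ ∈ D) (H : Subgroup G) [H.Normal]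
    (t : G ⧸ H) : fiberCard D H t⁻¹ = fiberCard D H t := by
  unfold fiberCard
  refine card_nbij' (·⁻¹) (·⁻¹) ?_ ?_ (fun x _ => inv_inv x) (fun x _ => inv_inv x) <;>
  · intro x hx
    simp only [coe_filter, Set.mem_ofPred_eq, QuotientGroup.mk_inv] at hx ⊢
    exact ⟨(hD x).1 hx.1, by simp [hx.2]⟩

open Classical in
lemma sum_diffReps_subgroup [Fintype G] [DecidableEq G] (D : Finset G) (H : Subgroup G)
    [H.Normal] : ∑ g with g ∈ H, diffReps D g = ∑ t, fiberCard D H t ^ 2 := by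
  unfold fiberCard
  rw [sum_diffReps, ← card_filter_apply_eq_apply_eq_sum_sq]
  congr 1
  ext p
  simp [QuotientGroup.eq_iff_div_mem, div_eq_mul_inv]

lemma IsPDS.fiberCard_of_index_eq_three [Fintype G] [DecidableEq G] {D : Finset G}
    {v k l m : ℕ} (hD : IsPDS D v k l m) (hreg : IsRegularPDS D) {H : Subgroup G} [H.Normal]
    (hH : H.index = 3) {u : G ⧸ H} (hu : u ≠ 1) :
    fiberCard D H 1 + 2 * fiberCard D H u = k ∧
      fiberCard D H 1 ^ 2 + 2 * fiberCard D H u ^ 2 =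
        k + l * fiberCard D H 1 + m * (Nat.card H - 1 - fiberCard D H 1) := by
  classical
  have hQ : Fintype.card (G ⧸ H) = 3 := by
    rw [← Nat.card_eq_fintype_card, ← Subgroup.index_eq_card, hH]
  let S : Finset G := {g | g ∈ H}
  have hS : #S = Nat.card H := by rw [Nat.card_eq_fintype_card, Fintype.card_subtype]
  have hSD : #(S ∩ D) = fiberCard D H 1 := by
    rw [fiberCard_one, ← Set.ncard_coe_finset]
    simp [S]
  have hsum := sum_fiberCard D H
  have hsq := (sum_diffReps_subgroup D H).symm.trans
    (hD.sum_diffReps hreg.1 (S := S) (by simp [S]))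
  rw [Fintype.sum_eq_add_add_inv_of_card_eq_three hQ hu, fiberCard_inv hreg.2] at hsum hsq
  rw [hS, hSD] at hsq
  exact ⟨by rw [← hD.2.1, ← hsum, two_mul, add_assoc], by rw [← hsq, two_mul, add_assoc]⟩

end Cosets

/-- A regular `(216,43,10,8)`-PDS in `(ℤ/2ℤ)³ × (ℤ/3ℤ)³` meets every subgroup of
order 72 in either 11 or 19 elements. -/
theorem index_three_subgroup_meets_43_PDS (D : Finset G216)
    (hD : IsPDS D 216 43 10 8) (hreg : IsRegularPDS D)
    (H : Subgroup G216) (hH : Nat.card H = 72) :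
    ((H : Set G216) ∩ ↑D).ncard = 11 ∨ ((H : Set G216) ∩ ↑D).ncard = 19 := by
  have hindex : H.index = 3 := by
    have := H.card_mul_index
    rw [hH, Nat.card_eq_fintype_card, hD.1] at this
    omega
  have : Nontrivial (G216 ⧸ H) := by
    rw [← Finite.one_lt_card_iff_nontrivial, ← Subgroup.index_eq_card, hindex]
    norm_num
  obtain ⟨u, hu⟩ := exists_ne (1 : G216 ⧸ H)
  obtain ⟨hsum, hsq⟩ := hD.fiberCard_of_index_eq_three hreg hindex hu
  rw [hH] at hsq
  rw [← fiberCard_one]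
  generalize fiberCard D H 1 = a at *
  generalize fiberCard D H u = b at *
  have hroots : (a - 11 : ℤ) * (a - 19) = 0 := by
    have : a ≤ 71 := by omega
    zify [this] at hsum hsq
    nlinarith
  rcases mul_eq_zero.1 hroots with h | h <;> omega
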